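/- For the mixture Bernoulli process Q, the random Hilberg exponents satisfy γ⁺_Q = γ⁻_Q = 0 Q-almost surely. -/

import Mathlib

open MeasureTheory ProbabilityTheory Filter

noncomputable section

/-- The binary positive logarithm `log⁺ x`: `log(x+1)` for `x ≥ 0` and `0` for `x < 0`. -/
def logPlus (x : ℝ) : ℝ := if 0 ≤ x then Real.logb 2 (x + 1) else 0

variable {𝕏 : Type*}

/-- The left shift on two-sided sequences. -/
def shift (ω : ℤ → 𝕏) : ℤ → 𝕏 := fun i => ω (i + 1)

/-- The block `X_{-n+1}^0` of a two-sided sequence. -/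
def blockNeg (n : ℕ) (ω : ℤ → 𝕏) : Fin n → 𝕏 := fun i => ω (-(n : ℤ) + 1 + (i : ℕ))

/-- The block `X_1^n` of a two-sided sequence. -/
def blockPos (n : ℕ) (ω : ℤ → 𝕏) : Fin n → 𝕏 := fun i => ω (1 + (i : ℕ))

/-- The block `X_{-n+1}^n` of a two-sided sequence. -/
def blockBoth (n : ℕ) (ω : ℤ → 𝕏) : Fin (2 * n) → 𝕏 := fun i => ω (-(n : ℤ) + 1 + (i : ℕ))

/-- A code assigns nonnegative values to finite strings. -/
def CodeNonneg (P : (n : ℕ) → (Fin n → 𝕏) → ℝ) : Prop := ∀ n x, 0 ≤ P n x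

/-- A code satisfies the Kraft inequality `∑_{x_1^n} P(x_1^n) ≤ 1`. -/
def CodeKraft (P : (n : ℕ) → (Fin n → 𝕏) → ℝ) : Prop :=
  ∀ n, 1 ≤ n → ∑' x : Fin n → 𝕏, P n x ≤ 1

/-- The pointwise mutual information
`I^P(n) = -log P(X_{-n+1}^0) - log P(X_1^n) + log P(X_{-n+1}^n)` (binary logarithm). -/
def pmi (P : (n : ℕ) → (Fin n → 𝕏) → ℝ) (n : ℕ) (ω : ℤ → 𝕏) : ℝ :=
  -Real.logb 2 (P n (blockNeg n ω)) - Real.logb 2 (P n (blockPos n ω))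
    + Real.logb 2 (P (2 * n) (blockBoth n ω))

/-- The upper random Hilberg exponent `γ⁺_P = limsup_n log⁺ I^P(n) / log n`. -/
def gammaPlus (P : (n : ℕ) → (Fin n → 𝕏) → ℝ) (ω : ℤ → 𝕏) : ℝ :=
  limsup (fun n : ℕ => logPlus (pmi P n ω) / Real.logb 2 n) atTop

/-- The lower random Hilberg exponent `γ⁻_P = liminf_n log⁺ I^P(n) / log n`. -/
def gammaMinus (P : (n : ℕ) → (Fin n → 𝕏) → ℝ) (ω : ℤ → 𝕏) : ℝ :=
  liminf (fun n : ℕ => logPlus (pmi P n ω) / Real.logb 2 n) atTop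

variable [MeasurableSpace 𝕏]

/-- The upper expected Hilberg exponent `δ⁺_P = limsup_n log⁺ E_Q I^P(n) / log n`. -/
def deltaPlus (Q : Measure (ℤ → 𝕏)) (P : (n : ℕ) → (Fin n → 𝕏) → ℝ) : ℝ :=
  limsup (fun n : ℕ => logPlus (∫ ω, pmi P n ω ∂Q) / Real.logb 2 n) atTop

/-- The lower expected Hilberg exponent `δ⁻_P = liminf_n log⁺ E_Q I^P(n) / log n`. -/
def deltaMinus (Q : Measure (ℤ → 𝕏)) (P : (n : ℕ) → (Fin n → 𝕏) → ℝ) : ℝ :=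
  liminf (fun n : ℕ => logPlus (∫ ω, pmi P n ω ∂Q) / Real.logb 2 n) atTop

/-- The measure `Q` regarded as a code: `Q(x_1^n) = Q(X_1^n = x_1^n)`. -/
def measureCode (Q : Measure (ℤ → 𝕏)) : (n : ℕ) → (Fin n → 𝕏) → ℝ :=
  fun n x => (Q {ω | blockPos n ω = x}).toReal

/-- The upper inverse expected Hilberg exponent
`ζ⁺_P = limsup_n log⁺ [E_Q (I^P(n)+B)⁻¹]⁻¹ / log n`, for a constant `B`. -/
def zetaPlus (Q : Measure (ℤ → 𝕏)) (P : (n : ℕ) → (Fin n → 𝕏) → ℝ) (B : ℝ) : ℝ :=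
  limsup (fun n : ℕ => logPlus ((∫ ω, (pmi P n ω + B)⁻¹ ∂Q)⁻¹) / Real.logb 2 n) atTop

/-- The lower inverse expected Hilberg exponent
`ζ⁻_P = liminf_n log⁺ [E_Q (I^P(n)+B)⁻¹]⁻¹ / log n`, for a constant `B`. -/
def zetaMinus (Q : Measure (ℤ → 𝕏)) (P : (n : ℕ) → (Fin n → 𝕏) → ℝ) (B : ℝ) : ℝ :=
  liminf (fun n : ℕ => logPlus ((∫ ω, (pmi P n ω + B)⁻¹ ∂Q)⁻¹) / Real.logb 2 n) atTop

/-- The parameter `ε_P = limsup_n log⁺ [Var_Q I^P(n) / E_Q I^P(n)] / log n`. -/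
def epsilonExp (Q : Measure (ℤ → 𝕏)) (P : (n : ℕ) → (Fin n → 𝕏) → ℝ) : ℝ :=
  limsup (fun n : ℕ =>
    logPlus (variance (pmi P n) Q / ∫ ω, pmi P n ω ∂Q) / Real.logb 2 n) atTop

/-- `I^P` is nearly nondecreasing: for some `C ≥ 0`,
`I^P(n+m) ≥ I^P(n) - 4 log m - C` pointwise for all `n, m ≥ 1`. -/
def NearlyNondecreasing (P : (n : ℕ) → (Fin n → 𝕏) → ℝ) : Prop :=
  ∃ C : ℝ, 0 ≤ C ∧ ∀ n m : ℕ, 1 ≤ n → 1 ≤ m → ∀ ω : ℤ → 𝕏,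
    pmi P n ω - 4 * Real.logb 2 m - C ≤ pmi P (n + m) ω


/-- The mixture Bernoulli specification: `Q(X_1^n = x_1^n) = (n+1)⁻¹ binom(n, Σ x_i)⁻¹`. -/
def IsMixtureBernoulli (Q : Measure (ℤ → Bool)) : Prop :=
  ∀ n : ℕ, 1 ≤ n → ∀ x : Fin n → Bool,
    Q {ω | blockPos n ω = x} =
      ENNReal.ofReal
        (((n : ℝ) + 1)⁻¹ *
          ((n.choose ((Finset.univ.filter fun i : Fin n => x i = true).card) : ℝ))⁻¹)

/-!
Under the mixture Bernoulli law, a block with `k` ones has code length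
`log (n+1) + log binom(n, k)`. Vandermonde's identity gives
`binom(n, k₁) binom(n, k₂) ≤ binom(2n, k₁ + k₂)`, so the binomial terms in `I^Q(n)` cancel up to a
nonpositive remainder and `I^Q(n) ≤ 2 log (n+1) - log (2n+1) ≤ log (n+1)` for every realization.
Hence `log⁺ I^Q(n) = O(log log n) = o(log n)`, and both random exponents vanish everywhere.
-/

open Real Topology Asymptotics

lemma logPlus_nonneg (x : ℝ) : 0 ≤ logPlus x := by
  unfold logPlus
  split_ifs with hx
  · exact logb_nonneg one_lt_two (by linarith)
  · exact le_rfl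

lemma monotone_logPlus : Monotone logPlus := by
  intro x y hxy
  by_cases hx : 0 ≤ x
  · simp only [logPlus, if_pos hx, if_pos (hx.trans hxy)]
    exact logb_le_logb_of_le one_lt_two (by linarith) (by linarith)
  · simpa only [logPlus, if_neg hx] using logPlus_nonneg y

lemma logPlus_of_nonneg {x : ℝ} (hx : 0 ≤ x) : logPlus x = logb 2 (x + 1) := if_pos hx

lemma Nat.choose_mul_choose_le_add_choose (m n i j : ℕ) :
    m.choose i * n.choose j ≤ (m + n).choose (i + j) := by
  rw [Nat.add_choose_eq]
  exact Finset.single_le_sum (f := fun p : ℕ × ℕ => m.choose p.1 * n.choose p.2)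
    (fun _ _ => Nat.zero_le _) (a := (i, j)) (Finset.HasAntidiagonal.mem_antidiagonal.mpr rfl)

lemma sum_blockBoth {𝕏 M : Type*} [AddCommMonoid M] (f : 𝕏 → M) (n : ℕ) (ω : ℤ → 𝕏) :
    ∑ i, f (blockBoth n ω i) = ∑ i, f (blockNeg n ω i) + ∑ i, f (blockPos n ω i) := by
  rw [← Fin.sum_congr' _ (two_mul n).symm, Fin.sum_univ_add]
  congr 1
  refine Finset.sum_congr rfl fun i _ => ?_
  simp only [blockBoth, blockPos, Fin.val_cast, Fin.val_natAdd]
  congr 2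
  push_cast
  ring

lemma card_filter_blockBoth {𝕏 : Type*} (p : 𝕏 → Prop) [DecidablePred p] (n : ℕ) (ω : ℤ → 𝕏) :
    (Finset.univ.filter fun i => p (blockBoth n ω i)).card
      = (Finset.univ.filter fun i => p (blockNeg n ω i)).card
        + (Finset.univ.filter fun i => p (blockPos n ω i)).card := by
  simp only [Finset.card_filter]
  exact sum_blockBoth (fun b => if p b then 1 else 0) n ω

lemma neg_logb_measureCode_of_isMixtureBernoulli {Q : Measure (ℤ → Bool)}
    (hQ : IsMixtureBernoulli Q) {n : ℕ} (hn : 1 ≤ n) (x : Fin n → Bool) :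
    -logb 2 (measureCode Q n x)
      = logb 2 (n + 1) + logb 2 (n.choose (Finset.univ.filter fun i => x i = true).card) := by
  have hk : (Finset.univ.filter fun i => x i = true).card ≤ n :=
    (Finset.card_filter_le _ _).trans_eq (Finset.card_fin n)
  have hchoose : (0 : ℝ) < n.choose (Finset.univ.filter fun i => x i = true).card := by
    exact_mod_cast Nat.choose_pos hk
  rw [measureCode, hQ n hn x, ENNReal.toReal_ofReal (by positivity),
    logb_mul (by positivity) (by positivity), logb_inv, logb_inv]
  ring

lemma pmi_measureCode_le_of_isMixtureBernoulli {Q : Measure (ℤ → Bool)}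
    (hQ : IsMixtureBernoulli Q) {n : ℕ} (hn : 1 ≤ n) (ω : ℤ → Bool) :
    pmi (measureCode Q) n ω ≤ logb 2 (n + 1) := by
  set k₁ := (Finset.univ.filter fun i => blockNeg n ω i = true).card
  set k₂ := (Finset.univ.filter fun i => blockPos n ω i = true).card
  have hk₁ : k₁ ≤ n := (Finset.card_filter_le _ _).trans_eq (Finset.card_fin n)
  have hk₂ : k₂ ≤ n := (Finset.card_filter_le _ _).trans_eq (Finset.card_fin n)
  have hcode₂ₙ := neg_logb_measureCode_of_isMixtureBernoulli hQ (by omega : 1 ≤ 2 * n)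
    (blockBoth n ω)
  rw [card_filter_blockBoth (· = true)] at hcode₂ₙ
  have hchoose : logb 2 (n.choose k₁) + logb 2 (n.choose k₂)
      ≤ logb 2 ((2 * n).choose (k₁ + k₂)) := by
    have h₁ : (0 : ℝ) < n.choose k₁ := by exact_mod_cast Nat.choose_pos hk₁
    have h₂ : (0 : ℝ) < n.choose k₂ := by exact_mod_cast Nat.choose_pos hk₂
    rw [← logb_mul h₁.ne' h₂.ne']
    refine logb_le_logb_of_le one_lt_two (by positivity) ?_
    rw [two_mul]
    exact_mod_cast Nat.choose_mul_choose_le_add_choose n n k₁ k₂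
  have hlen : logb 2 ((n : ℝ) + 1) ≤ logb 2 (((2 * n : ℕ) : ℝ) + 1) :=
    logb_le_logb_of_le one_lt_two (by positivity) (by push_cast; linarith)
  unfold pmi
  linarith [neg_logb_measureCode_of_isMixtureBernoulli hQ hn (blockNeg n ω),
    neg_logb_measureCode_of_isMixtureBernoulli hQ hn (blockPos n ω)]

lemma tendsto_logPlus_logb_add_one_div_logb :
    Tendsto (fun x : ℝ => logPlus (logb 2 (x + 1)) / logb 2 x) atTop (𝓝 0) := by
  set g : ℝ → ℝ := fun x => logb 2 (x + 1) + 1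
  have hg : Tendsto g atTop atTop :=
    tendsto_atTop_add_const_right _ 1 <|
      (tendsto_logb_atTop one_lt_two).comp (tendsto_atTop_add_const_right _ 1 tendsto_id)
  have hlog_g : (fun x => logb 2 (g x)) =o[atTop] g :=
    (isLittleO_logb_id_atTop (b := 2)).comp_tendsto hg
  have hg_log : g =O[atTop] logb 2 := by
    refine IsBigO.of_bound 3 ?_
    filter_upwards [eventually_ge_atTop 2] with x hx
    have hlogx : 1 ≤ logb 2 x := by
      rw [← logb_self_eq_one one_lt_two]
      exact logb_le_logb_of_le one_lt_two two_pos hx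
    have hsucc : logb 2 (x + 1) ≤ 2 * logb 2 x := by
      rw [← logb_rpow_eq_mul_logb_of_pos (by linarith)]
      exact logb_le_logb_of_le one_lt_two (by linarith) (by norm_cast; nlinarith)
    have hg_nonneg : 0 ≤ g x := by
      have := logb_nonneg one_lt_two (by linarith : 1 ≤ x + 1)
      simp only [g]; linarith
    rw [norm_of_nonneg hg_nonneg, norm_of_nonneg (by linarith)]
    simp only [g]; linarith
  refine (hlog_g.trans_isBigO hg_log).tendsto_div_nhds_zero.congr' ?_
  filter_upwards [eventually_ge_atTop 0] with x hx
  rw [logPlus_of_nonneg (logb_nonneg one_lt_two (by linarith))]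

lemma tendsto_logPlus_pmi_measureCode_div_logb {Q : Measure (ℤ → Bool)}
    (hQ : IsMixtureBernoulli Q) (ω : ℤ → Bool) :
    Tendsto (fun n : ℕ => logPlus (pmi (measureCode Q) n ω) / logb 2 n) atTop (𝓝 0) := by
  refine squeeze_zero' ?_ ?_
    (tendsto_logPlus_logb_add_one_div_logb.comp tendsto_natCast_atTop_atTop)
  all_goals
    filter_upwards [eventually_ge_atTop 1] with n hn
    have hlogn : 0 ≤ logb 2 (n : ℝ) := logb_nonneg one_lt_two (by exact_mod_cast hn)
  · exact div_nonneg (logPlus_nonneg _) hlogn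
  · exact div_le_div_of_nonneg_right
      (monotone_logPlus (pmi_measureCode_le_of_isMixtureBernoulli hQ hn ω)) hlogn

theorem mixtureBernoulli_random_exponents_general (Q : Measure (ℤ → Bool))
    (hQ : IsMixtureBernoulli Q) :
    ∀ᵐ ω ∂Q, gammaPlus (measureCode Q) ω = 0 ∧ gammaMinus (measureCode Q) ω = 0 :=
  .of_forall fun ω =>
    have h := tendsto_logPlus_pmi_measureCode_div_logb hQ ω
    ⟨h.limsup_eq, h.liminf_eq⟩

/-- For the mixture Bernoulli process `Q`, the random Hilberg exponents
satisfy `γ⁺_Q = γ⁻_Q = 0` `Q`-almost surely. -/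
theorem mixtureBernoulli_random_exponents (Q : Measure (ℤ → Bool))
    [IsProbabilityMeasure Q] (hstat : MeasurePreserving shift Q Q)
    (hQ : IsMixtureBernoulli Q) :
    ∀ᵐ ω ∂Q, gammaPlus (measureCode Q) ω = 0 ∧ gammaMinus (measureCode Q) ω = 0 :=
  mixtureBernoulli_random_exponents_general Q hQ
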